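/- Let G be a bipartite permutation graph with bipartition (X, Y), given by a permutation diagram t, b : V → ℝ. Then there exists a C4-packing P of G of maximum cardinality such that for every square S ∈ P, the two vertices of S ∩ X are consecutive in X under the ordering by t (no vertex of X lies strictly between them in t-value), and the two vertices of S ∩ Y are consecutive in Y under the ordering by t. -/

import Mathlib

/-- A square: a set of four vertices inducing a 4-cycle `C4`. -/
def IsC4Square {V : Type*} [DecidableEq V] (G : SimpleGraph V) (S : Finset V) : Prop :=
  ∃ v1 v2 v3 v4 : V, S = {v1, v2, v3, v4} ∧ S.card = 4 ∧
    G.Adj v1 v2 ∧ G.Adj v2 v3 ∧ G.Adj v3 v4 ∧ G.Adj v4 v1 ∧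
    ¬G.Adj v1 v3 ∧ ¬G.Adj v2 v4

/-- A `C4`-packing: a collection of pairwise vertex-disjoint squares. -/
def IsC4Packing {V : Type*} [DecidableEq V] (G : SimpleGraph V)
    (P : Finset (Finset V)) : Prop :=
  (∀ S ∈ P, IsC4Square G S) ∧
    (P : Set (Finset V)).Pairwise fun S T => Disjoint S T

/-!
Among the maximum `C4`-packings choose one of least total spread, the spread of a square being the
number of `X`-vertices strictly between its two `X`-vertices plus the number of `Y`-vertices
strictly between its two `Y`-vertices (in `top`-order). Suppose `x ∈ X` lies strictly between the
`X`-vertices `x₁ < x₂` of a square `S`. Along `X` the `top`- and `bot`-orders agree, so `x` is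
adjacent to both `Y`-vertices of `S`. If `x` is not covered, `{x₁, x}` and the `Y`-vertices of `S`
form a square of smaller spread. Otherwise `x` lies in a square `T` whose `X`-interval crosses or is
nested in that of `S`, and the eight vertices of `S ∪ T` regroup into two squares of smaller total
spread; in the nested case the strong ordering of bipartite permutation graphs shows how to share
out the `Y`-vertices. The `Y`-side follows by exchanging `X` and `Y`.
-/

open Finset Function

section Spread

variable {V : Type*}

noncomputable def numBetween (X : Set V) (t : V → ℝ) (u v : V) : ℕ :=
  {w | w ∈ X ∧ t u < t w ∧ t w < t v}.ncard

noncomputable def spread (X : Set V) (t : V → ℝ) (S : Finset V) : ℕ :=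
  {w | w ∈ X ∧ ∃ u ∈ S, ∃ v ∈ S, u ∈ X ∧ v ∈ X ∧ t u < t w ∧ t w < t v}.ncard

noncomputable def totalSpread (X Y : Set V) (t : V → ℝ) (S : Finset V) : ℕ :=
  spread X t S + spread Y t S

lemma totalSpread_comm (X Y : Set V) (t : V → ℝ) : totalSpread X Y t = totalSpread Y X t :=
  funext fun _ => add_comm _ _

lemma numBetween_eq_add [Finite V] {X : Set V} {t : V → ℝ} (ht : Injective t) {u w v : V}
    (hw : w ∈ X) (huw : t u < t w) (hwv : t w < t v) :
    numBetween X t u v = numBetween X t u w + 1 + numBetween X t w v := by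
  have hsplit : {x | x ∈ X ∧ t u < t x ∧ t x < t v} =
      {x | x ∈ X ∧ t u < t x ∧ t x < t w} ∪ insert w {x | x ∈ X ∧ t w < t x ∧ t x < t v} := by
    ext x
    simp only [Set.mem_ofPred_eq, Set.mem_union, Set.mem_insert_iff]
    rcases lt_trichotomy (t x) (t w) with h | h | h
    · constructor
      · rintro ⟨hx, h₁, -⟩; exact .inl ⟨hx, h₁, h⟩
      · rintro (⟨hx, h₁, -⟩ | rfl | ⟨-, h', -⟩)
        exacts [⟨hx, h₁, h.trans hwv⟩, (lt_irrefl _ h).elim, (lt_asymm h h').elim]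
    · obtain rfl := ht h
      simp [hw, huw, hwv]
    · constructor
      · rintro ⟨hx, -, h₂⟩; exact .inr (.inr ⟨hx, h, h₂⟩)
      · rintro (⟨-, -, h'⟩ | rfl | ⟨hx, -, h₂⟩)
        exacts [(lt_asymm h h').elim, (lt_irrefl _ h).elim, ⟨hx, huw.trans h, h₂⟩]
  have hdisj : Disjoint {x | x ∈ X ∧ t u < t x ∧ t x < t w}
      (insert w {x | x ∈ X ∧ t w < t x ∧ t x < t v}) := by
    rw [Set.disjoint_left]
    rintro x ⟨-, -, hx⟩ (rfl | ⟨-, hx', -⟩)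
    exacts [lt_irrefl _ hx, lt_asymm hx hx']
  unfold numBetween
  rw [hsplit, Set.ncard_union_eq hdisj, Set.ncard_insert_of_notMem (by simp)]
  ring

lemma spread_eq_numBetween [DecidableEq V] {X : Set V} {t : V → ℝ} {p q r s : V}
    (hp : p ∈ X) (hq : q ∈ X) (hr : r ∉ X) (hs : s ∉ X) (hpq : t p < t q) :
    spread X t {p, q, r, s} = numBetween X t p q := by
  unfold spread numBetween
  congr 1
  ext w
  simp only [Set.mem_ofPred_eq, Finset.mem_insert, Finset.mem_singleton, exists_eq_or_imp,
    exists_eq_left, hr, hs, hp, hq, false_and, or_false, true_and]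
  constructor
  · rintro ⟨hw, (⟨h₁, h₂⟩ | ⟨h₁, h₂⟩) | (⟨h₁, h₂⟩ | ⟨h₁, h₂⟩)⟩
    all_goals first | exact ⟨hw, h₁, h₂⟩ | exact absurd (h₁.trans h₂) (by linarith)
  · rintro ⟨hw, h₁, h₂⟩
    exact ⟨hw, .inl (.inr ⟨h₁, h₂⟩)⟩

end Spread

section Packing

variable {V : Type*} [DecidableEq V] {G : SimpleGraph V}

lemma IsC4Square.card {S : Finset V} (hS : IsC4Square G S) : S.card = 4 :=
  let ⟨_, _, _, _, _, h, _⟩ := hS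
  h

lemma IsC4Square.nonempty {S : Finset V} (hS : IsC4Square G S) : S.Nonempty :=
  card_pos.1 (by rw [hS.card]; norm_num)

lemma IsC4Packing.mono {P Q : Finset (Finset V)} (hP : IsC4Packing G P) (hQ : Q ⊆ P) :
    IsC4Packing G Q :=
  ⟨fun S hS => hP.1 S (hQ hS), hP.2.mono (coe_subset.2 hQ)⟩

lemma IsC4Packing.sdiff_union {P A B : Finset (Finset V)} (hP : IsC4Packing G P) (hA : A ⊆ P)
    (hB : IsC4Packing G B) (hBA : ∀ S' ∈ B, ∀ v ∈ S', (∃ S ∈ A, v ∈ S) ∨ ∀ Q ∈ P, v ∉ Q) :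
    IsC4Packing G (P \ A ∪ B) ∧ Disjoint (P \ A) B := by
  have hcross : ∀ Q ∈ P \ A, ∀ S' ∈ B, Disjoint Q S' := by
    intro Q hQ S' hS'
    rw [mem_sdiff] at hQ
    refine disjoint_left.2 fun v hvQ hvS' => ?_
    obtain ⟨S, hSA, hvS⟩ | hfree := hBA S' hS' v hvS'
    · have hQS : Q ≠ S := by rintro rfl; exact hQ.2 hSA
      exact disjoint_left.1 (hP.2 hQ.1 (hA hSA) hQS) hvQ hvS
    · exact hfree Q hQ.1 hvQ
  have hdisj : Disjoint (P \ A) B := disjoint_left.2 fun S hS hS' =>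
    (hB.1 S hS').nonempty.ne_empty (disjoint_self.1 (hcross S hS S hS'))
  refine ⟨⟨fun S hS => ?_, ?_⟩, hdisj⟩
  · rcases mem_union.1 hS with hS | hS
    exacts [hP.1 S (sdiff_subset hS), hB.1 S hS]
  · rw [coe_union, Set.pairwise_union_of_symm]
    exact ⟨(hP.mono sdiff_subset).2, hB.2, fun Q hQ S' hS' _ => hcross Q hQ S' hS'⟩

def IsMinCostC4Packing (G : SimpleGraph V) (f : Finset V → ℕ) (P : Finset (Finset V)) : Prop :=
  IsC4Packing G P ∧
    ∀ Q, IsC4Packing G Q → Q.card = P.card → ∑ S ∈ P, f S ≤ ∑ S ∈ Q, f S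

lemma exists_maximum_isMinCostC4Packing [Fintype V] (G : SimpleGraph V) (f : Finset V → ℕ) :
    ∃ P, IsMinCostC4Packing G f P ∧ ∀ Q, IsC4Packing G Q → Q.card ≤ P.card := by
  classical
  set packings := (univ : Finset (Finset (Finset V))).filter (IsC4Packing G)
  obtain ⟨P₀, hP₀, hmax⟩ := packings.exists_max_image card ⟨∅, by simp [packings, IsC4Packing]⟩
  obtain ⟨P, hP, hmin⟩ := (packings.filter (·.card = P₀.card)).exists_min_image
    (fun P => ∑ S ∈ P, f S) ⟨P₀, mem_filter.2 ⟨hP₀, rfl⟩⟩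
  simp only [packings, mem_filter, mem_univ, true_and] at hP₀ hP hmax hmin
  refine ⟨P, ⟨hP.1, fun Q hQ hc => hmin Q ⟨hQ, hc.trans hP.2⟩⟩, fun Q hQ => hP.2 ▸ hmax Q hQ⟩

namespace IsMinCostC4Packing

variable {f : Finset V → ℕ} {P : Finset (Finset V)}

lemma sum_le_of_exchange (hP : IsMinCostC4Packing G f P) {A B : Finset (Finset V)}
    (hA : A ⊆ P) (hB : IsC4Packing G B) (hcard : B.card = A.card)
    (hBA : ∀ S' ∈ B, ∀ v ∈ S', (∃ S ∈ A, v ∈ S) ∨ ∀ Q ∈ P, v ∉ Q) :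
    ∑ S ∈ A, f S ≤ ∑ S ∈ B, f S := by
  obtain ⟨hP', hdisj⟩ := hP.1.sdiff_union hA hB hBA
  have hle := hP.2 _ hP' (by
    rw [card_union_of_disjoint hdisj, card_sdiff_of_subset hA, hcard]
    exact Nat.sub_add_cancel (card_le_card hA))
  rw [sum_union hdisj, ← sum_sdiff hA] at hle
  omega

lemma le_of_replace (hP : IsMinCostC4Packing G f P) {S S' : Finset V} {x : V} (hS : S ∈ P)
    (hS' : IsC4Square G S') (hsub : S' ⊆ insert x S) (hx : ∀ Q ∈ P, x ∉ Q) : f S ≤ f S' := by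
  have hB : IsC4Packing G {S'} := ⟨by simpa using hS', by simp⟩
  simpa using hP.sum_le_of_exchange (singleton_subset_iff.2 hS) hB rfl (by
    simp only [mem_singleton, forall_eq, exists_eq_left]
    intro v hv
    rcases mem_insert.1 (hsub hv) with rfl | hv
    exacts [.inr hx, .inl hv])

lemma add_le_of_swap (hP : IsMinCostC4Packing G f P) {S T S' T' : Finset V} (hS : S ∈ P)
    (hT : T ∈ P) (hST : S ≠ T) (hS' : IsC4Square G S') (hT' : IsC4Square G T')
    (hU : S' ∪ T' = S ∪ T) : f S + f T ≤ f S' + f T' := by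
  have hcardU : (S' ∪ T').card = S'.card + T'.card := by
    rw [hU, card_union_of_disjoint (hP.1.2 hS hT hST), (hP.1.1 S hS).card, (hP.1.1 T hT).card,
      hS'.card, hT'.card]
  have hdisj : Disjoint S' T' := card_union_eq_card_add_card.1 hcardU
  have hne : S' ≠ T' := by
    rintro rfl
    exact hS'.nonempty.ne_empty (disjoint_self.1 hdisj)
  have hB : IsC4Packing G {S', T'} := by
    refine ⟨by simp [hS', hT'], ?_⟩
    rw [coe_pair, Set.pairwise_pair]
    exact fun _ => ⟨hdisj, hdisj.symm⟩
  have hBA : ∀ S'' ∈ ({S', T'} : Finset (Finset V)), ∀ v ∈ S'',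
      (∃ R ∈ ({S, T} : Finset (Finset V)), v ∈ R) ∨ ∀ Q ∈ P, v ∉ Q := by
    intro S'' hS'' v hv
    have hv' : v ∈ S' ∪ T' := by
      simp only [mem_insert, mem_singleton] at hS''
      rcases hS'' with rfl | rfl <;> simp [hv]
    rw [hU, mem_union] at hv'
    simpa using Or.inl hv'
  simpa [sum_pair hST, sum_pair hne] using
    hP.sum_le_of_exchange (insert_subset hS (singleton_subset_iff.2 hT)) hB
      (by rw [card_pair hST, card_pair hne]) hBA

end IsMinCostC4Packing

end Packing

section PermutationDiagram

variable {V : Type*}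

structure IsPermDiagram (G : SimpleGraph V) (top bot : V → ℝ) : Prop where
  injective_top : Injective top
  injective_bot : Injective bot
  adj_iff : ∀ u v, G.Adj u v ↔
    (top u < top v ∧ bot v < bot u) ∨ (top v < top u ∧ bot u < bot v)

namespace IsPermDiagram

variable {G : SimpleGraph V} {top bot : V → ℝ}

lemma bot_lt_bot (hD : IsPermDiagram G top bot) {u v : V} (h : ¬G.Adj u v)
    (huv : top u < top v) : bot u < bot v := by
  rw [hD.adj_iff] at h
  simp only [not_or, not_and, not_lt] at h
  exact (h.1 huv).lt_of_ne fun he => huv.ne (congrArg top (hD.injective_bot he))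

lemma adj_of_between (hD : IsPermDiagram G top bot) {x₁ x x₂ y : V} (h₁ : ¬G.Adj x₁ x)
    (h₂ : ¬G.Adj x x₂) (hx₁ : top x₁ < top x) (hx₂ : top x < top x₂) (hy₁ : G.Adj x₁ y)
    (hy₂ : G.Adj x₂ y) : G.Adj x y := by
  have hb₁ := hD.bot_lt_bot h₁ hx₁
  have hb₂ := hD.bot_lt_bot h₂ hx₂
  rw [hD.adj_iff] at hy₁ hy₂ ⊢
  rcases hy₁ with ⟨_, _⟩ | ⟨_, _⟩ <;> rcases hy₂ with ⟨_, _⟩ | ⟨_, _⟩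
  · exact .inl ⟨by linarith, by linarith⟩
  · linarith
  · linarith
  · exact .inr ⟨by linarith, by linarith⟩

lemma strong_ordering (hD : IsPermDiagram G top bot) {p q r s : V} (hpq : ¬G.Adj p q)
    (hrs : ¬G.Adj r s) (hpq' : top p < top q) (hrs' : top r < top s) (hps : G.Adj p s)
    (hqr : G.Adj q r) : G.Adj p r ∧ G.Adj q s := by
  have hb₁ := hD.bot_lt_bot hpq hpq'
  have hb₂ := hD.bot_lt_bot hrs hrs'
  rw [hD.adj_iff] at hps hqr
  rw [hD.adj_iff, hD.adj_iff]
  rcases hps with ⟨_, _⟩ | ⟨_, _⟩ <;> rcases hqr with ⟨_, _⟩ | ⟨_, _⟩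
  all_goals first
    | exact ⟨.inl ⟨by linarith, by linarith⟩, .inl ⟨by linarith, by linarith⟩⟩
    | exact ⟨.inr ⟨by linarith, by linarith⟩, .inr ⟨by linarith, by linarith⟩⟩

end IsPermDiagram

end PermutationDiagram

section Bipartite

variable {V : Type*} {G : SimpleGraph V} {X Y : Set V} {top bot : V → ℝ}

structure IsOrderedSquare (G : SimpleGraph V) (X Y : Set V) (top : V → ℝ) (x₁ x₂ y₁ y₂ : V) :
    Prop where
  mem_x₁ : x₁ ∈ X
  mem_x₂ : x₂ ∈ X
  mem_y₁ : y₁ ∈ Y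
  mem_y₂ : y₂ ∈ Y
  lt_x : top x₁ < top x₂
  lt_y : top y₁ < top y₂
  adj₁₁ : G.Adj x₁ y₁
  adj₁₂ : G.Adj x₁ y₂
  adj₂₁ : G.Adj x₂ y₁
  adj₂₂ : G.Adj x₂ y₂

namespace IsOrderedSquare

variable {x₁ x₂ y₁ y₂ : V}

lemma isC4Square [DecidableEq V] (hSq : IsOrderedSquare G X Y top x₁ x₂ y₁ y₂)
    (hX : ∀ u ∈ X, ∀ v ∈ X, ¬G.Adj u v) (hY : ∀ u ∈ Y, ∀ v ∈ Y, ¬G.Adj u v) :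
    IsC4Square G {x₁, x₂, y₁, y₂} := by
  refine ⟨x₁, y₁, x₂, y₂, by ext; simp; tauto, ?_, hSq.adj₁₁, hSq.adj₂₁.symm, hSq.adj₂₂,
    hSq.adj₁₂.symm, hX _ hSq.mem_x₁ _ hSq.mem_x₂, hY _ hSq.mem_y₁ _ hSq.mem_y₂⟩
  exact card_eq_four.2 ⟨x₁, x₂, y₁, y₂, fun h => hSq.lt_x.ne (congrArg top h),
    G.ne_of_adj hSq.adj₁₁, G.ne_of_adj hSq.adj₁₂, G.ne_of_adj hSq.adj₂₁, G.ne_of_adj hSq.adj₂₂,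
    fun h => hSq.lt_y.ne (congrArg top h), rfl⟩

lemma totalSpread_eq [DecidableEq V] (hSq : IsOrderedSquare G X Y top x₁ x₂ y₁ y₂)
    (hX : ∀ u ∈ X, ∀ v ∈ X, ¬G.Adj u v) (hY : ∀ u ∈ Y, ∀ v ∈ Y, ¬G.Adj u v) :
    totalSpread X Y top {x₁, x₂, y₁, y₂} = numBetween X top x₁ x₂ + numBetween Y top y₁ y₂ := by
  have hyX : ∀ {y}, G.Adj x₁ y → y ∉ X := fun h hy => hX _ hSq.mem_x₁ _ hy h
  have hxY : ∀ {x}, G.Adj x y₁ → x ∉ Y := fun h hx => hY _ hSq.mem_y₁ _ hx h.symm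
  rw [totalSpread, spread_eq_numBetween hSq.mem_x₁ hSq.mem_x₂ (hyX hSq.adj₁₁) (hyX hSq.adj₁₂)
    hSq.lt_x, show ({x₁, x₂, y₁, y₂} : Finset V) = {y₁, y₂, x₁, x₂} by ext; simp; tauto,
    spread_eq_numBetween hSq.mem_y₁ hSq.mem_y₂ (hxY hSq.adj₁₁) (hxY hSq.adj₂₁) hSq.lt_y]

lemma eq_of_mem [DecidableEq V] (hSq : IsOrderedSquare G X Y top x₁ x₂ y₁ y₂)
    (hX : ∀ u ∈ X, ∀ v ∈ X, ¬G.Adj u v) {w : V} (hw : w ∈ ({x₁, x₂, y₁, y₂} : Finset V))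
    (hwX : w ∈ X) : w = x₁ ∨ w = x₂ := by
  simp only [mem_insert, mem_singleton] at hw
  rcases hw with rfl | rfl | rfl | rfl
  exacts [.inl rfl, .inr rfl, (hX _ hSq.mem_x₁ _ hwX hSq.adj₁₁).elim,
    (hX _ hSq.mem_x₁ _ hwX hSq.adj₁₂).elim]

lemma adj_of_between (hSq : IsOrderedSquare G X Y top x₁ x₂ y₁ y₂)
    (hD : IsPermDiagram G top bot) (hX : ∀ u ∈ X, ∀ v ∈ X, ¬G.Adj u v) {x : V} (hx : x ∈ X)
    (h₁ : top x₁ < top x) (h₂ : top x < top x₂) : G.Adj x y₁ ∧ G.Adj x y₂ :=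
  ⟨hD.adj_of_between (hX _ hSq.mem_x₁ _ hx) (hX _ hx _ hSq.mem_x₂) h₁ h₂ hSq.adj₁₁ hSq.adj₂₁,
    hD.adj_of_between (hX _ hSq.mem_x₁ _ hx) (hX _ hx _ hSq.mem_x₂) h₁ h₂ hSq.adj₁₂ hSq.adj₂₂⟩

lemma adj_or_adj_of_between (hSq : IsOrderedSquare G X Y top x₁ x₂ y₁ y₂)
    (hD : IsPermDiagram G top bot) (hX : ∀ u ∈ X, ∀ v ∈ X, ¬G.Adj u v)
    (hY : ∀ u ∈ Y, ∀ v ∈ Y, ¬G.Adj u v) {x u : V} (hx : x ∈ X) (hu : u ∈ Y)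
    (h₁ : top x₁ < top x) (h₂ : top x < top x₂) (hxu : G.Adj x u) :
    G.Adj x₁ u ∨ G.Adj x₂ u := by
  rcases lt_trichotomy (top u) (top y₁) with h | h | h
  · exact .inl (hD.strong_ordering (hX _ hSq.mem_x₁ _ hx) (hY _ hu _ hSq.mem_y₁) h₁ h
      hSq.adj₁₁ hxu).1
  · exact .inl (hD.injective_top h ▸ hSq.adj₁₁)
  · exact .inr (hD.strong_ordering (hX _ hx _ hSq.mem_x₂) (hY _ hSq.mem_y₁ _ hu) h₂ h
      hxu hSq.adj₂₁).2

lemma top_lt_of_not_adj (hSq : IsOrderedSquare G X Y top x₁ x₂ y₁ y₂)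
    (hD : IsPermDiagram G top bot) (hX : ∀ u ∈ X, ∀ v ∈ X, ¬G.Adj u v)
    (hY : ∀ u ∈ Y, ∀ v ∈ Y, ¬G.Adj u v) {u : V} (hu : u ∈ Y) (h₁ : G.Adj x₁ u)
    (h₂ : ¬G.Adj x₂ u) : top u < top y₁ := by
  refine lt_of_le_of_ne (not_lt.1 fun h => h₂ ?_) fun h => h₂ (hD.injective_top h ▸ hSq.adj₂₁)
  exact (hD.strong_ordering (hX _ hSq.mem_x₁ _ hSq.mem_x₂) (hY _ hSq.mem_y₁ _ hu) hSq.lt_x h h₁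
    hSq.adj₂₁).2

lemma top_gt_of_not_adj (hSq : IsOrderedSquare G X Y top x₁ x₂ y₁ y₂)
    (hD : IsPermDiagram G top bot) (hX : ∀ u ∈ X, ∀ v ∈ X, ¬G.Adj u v)
    (hY : ∀ u ∈ Y, ∀ v ∈ Y, ¬G.Adj u v) {u : V} (hu : u ∈ Y) (h₁ : G.Adj x₂ u)
    (h₂ : ¬G.Adj x₁ u) : top y₂ < top u := by
  refine lt_of_le_of_ne (not_lt.1 fun h => h₂ ?_) fun h => h₂ (hD.injective_top h ▸ hSq.adj₁₂)
  exact (hD.strong_ordering (hX _ hSq.mem_x₁ _ hSq.mem_x₂) (hY _ hu _ hSq.mem_y₂) hSq.lt_x h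
    hSq.adj₁₂ h₁).1

end IsOrderedSquare

lemma exists_isOrderedSquare_of_adj [DecidableEq V] (ht : Injective top) {x x' y y' : V}
    (hx : x ∈ X) (hx' : x' ∈ X) (hy : y ∈ Y) (hy' : y' ∈ Y) (hxx' : x ≠ x') (hyy' : y ≠ y')
    (h₁ : G.Adj x y) (h₂ : G.Adj x y') (h₃ : G.Adj x' y) (h₄ : G.Adj x' y') :
    ∃ x₁ x₂ y₁ y₂, IsOrderedSquare G X Y top x₁ x₂ y₁ y₂ ∧
      ({x, x', y, y'} : Finset V) = {x₁, x₂, y₁, y₂} := by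
  rcases (ht.ne hxx').lt_or_gt with hlt | hlt <;> rcases (ht.ne hyy').lt_or_gt with hlt' | hlt'
  · exact ⟨x, x', y, y', ⟨hx, hx', hy, hy', hlt, hlt', h₁, h₂, h₃, h₄⟩, rfl⟩
  · exact ⟨x, x', y', y, ⟨hx, hx', hy', hy, hlt, hlt', h₂, h₁, h₄, h₃⟩, by ext; simp; tauto⟩
  · exact ⟨x', x, y, y', ⟨hx', hx, hy, hy', hlt, hlt', h₃, h₄, h₁, h₂⟩, by ext; simp; tauto⟩
  · exact ⟨x', x, y', y, ⟨hx', hx, hy', hy, hlt, hlt', h₄, h₃, h₂, h₁⟩, by ext; simp; tauto⟩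

lemma exists_isOrderedSquare [DecidableEq V] (ht : Injective top)
    (hX : ∀ u ∈ X, ∀ v ∈ X, ¬G.Adj u v) (hY : ∀ u ∈ Y, ∀ v ∈ Y, ¬G.Adj u v)
    (hunion : X ∪ Y = Set.univ) {S : Finset V} (hS : IsC4Square G S) :
    ∃ x₁ x₂ y₁ y₂, IsOrderedSquare G X Y top x₁ x₂ y₁ y₂ ∧ S = {x₁, x₂, y₁, y₂} := by
  obtain ⟨v₁, v₂, v₃, v₄, rfl, hcard, h₁₂, h₂₃, h₃₄, h₄₁, -, -⟩ := hS
  have h₁₃ : v₁ ≠ v₃ := by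
    rintro rfl
    simp only [mem_insert, mem_singleton, true_or, or_true, insert_eq_of_mem] at hcard
    exact absurd hcard (card_le_three.trans_lt (by norm_num)).ne
  have h₂₄ : v₂ ≠ v₄ := by
    rintro rfl
    simp only [mem_insert, mem_singleton, or_true, insert_eq_of_mem] at hcard
    exact absurd hcard (card_le_three.trans_lt (by norm_num)).ne
  have hXY : ∀ v, v ∈ X ∨ v ∈ Y := fun v => Set.mem_union _ _ _ |>.1 (hunion ▸ Set.mem_univ v)
  have hY_of_adj : ∀ {u v}, u ∈ X → G.Adj u v → v ∈ Y :=
    fun hu h => (hXY _).resolve_left fun hv => hX _ hu _ hv h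
  have hX_of_adj : ∀ {u v}, u ∈ Y → G.Adj u v → v ∈ X :=
    fun hu h => (hXY _).resolve_right fun hv => hY _ hu _ hv h
  rcases hXY v₁ with hv₁ | hv₁
  · have hv₂ := hY_of_adj hv₁ h₁₂
    have hv₃ := hX_of_adj hv₂ h₂₃
    rw [show ({v₁, v₂, v₃, v₄} : Finset V) = {v₁, v₃, v₂, v₄} by ext; simp; tauto]
    exact exists_isOrderedSquare_of_adj ht hv₁ hv₃ hv₂ (hY_of_adj hv₃ h₃₄) h₁₃ h₂₄ h₁₂ h₄₁.symm
      h₂₃.symm h₃₄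
  · have hv₂ := hX_of_adj hv₁ h₁₂
    have hv₃ := hY_of_adj hv₂ h₂₃
    rw [show ({v₁, v₂, v₃, v₄} : Finset V) = {v₂, v₄, v₁, v₃} by ext; simp; tauto]
    exact exists_isOrderedSquare_of_adj ht hv₂ (hX_of_adj hv₃ h₃₄) hv₁ hv₃ h₂₄ h₁₃ h₁₂.symm h₂₃
      h₄₁ h₃₄.symm

end Bipartite

namespace IsMinCostC4Packing

variable {V : Type*} [DecidableEq V] {G : SimpleGraph V} {X Y : Set V} {top bot : V → ℝ}
  {P : Finset (Finset V)} {x₁ x₂ y₁ y₂ a b u₁ u₂ : V}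

lemma exists_mem_of_between [Finite V] (hP : IsMinCostC4Packing G (totalSpread X Y top) P)
    (hD : IsPermDiagram G top bot) (hX : ∀ u ∈ X, ∀ v ∈ X, ¬G.Adj u v)
    (hY : ∀ u ∈ Y, ∀ v ∈ Y, ¬G.Adj u v) (hSq : IsOrderedSquare G X Y top x₁ x₂ y₁ y₂)
    (hS : {x₁, x₂, y₁, y₂} ∈ P) {x : V} (hx : x ∈ X) (h₁ : top x₁ < top x)
    (h₂ : top x < top x₂) : ∃ Q ∈ P, x ∈ Q := by
  by_contra! hfree
  obtain ⟨hxy₁, hxy₂⟩ := hSq.adj_of_between hD hX hx h₁ h₂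
  have hSq' : IsOrderedSquare G X Y top x₁ x y₁ y₂ :=
    ⟨hSq.mem_x₁, hx, hSq.mem_y₁, hSq.mem_y₂, h₁, hSq.lt_y, hSq.adj₁₁, hSq.adj₁₂, hxy₁, hxy₂⟩
  have hle := hP.le_of_replace hS (hSq'.isC4Square hX hY) (by intro w; simp; tauto) hfree
  rw [hSq.totalSpread_eq hX hY, hSq'.totalSpread_eq hX hY,
    numBetween_eq_add hD.injective_top hx h₁ h₂] at hle
  omega

lemma not_crossing [Finite V] (hP : IsMinCostC4Packing G (totalSpread X Y top) P)
    (hD : IsPermDiagram G top bot) (hX : ∀ u ∈ X, ∀ v ∈ X, ¬G.Adj u v)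
    (hY : ∀ u ∈ Y, ∀ v ∈ Y, ¬G.Adj u v) (hSq : IsOrderedSquare G X Y top x₁ x₂ y₁ y₂)
    (hTq : IsOrderedSquare G X Y top a b u₁ u₂) (hS : {x₁, x₂, y₁, y₂} ∈ P)
    (hT : {a, b, u₁, u₂} ∈ P) (hST : ({x₁, x₂, y₁, y₂} : Finset V) ≠ {a, b, u₁, u₂})
    (h₁ : top x₁ < top a) (h₂ : top a < top x₂) (h₃ : top x₂ < top b) : False := by
  obtain ⟨hay₁, hay₂⟩ := hSq.adj_of_between hD hX hTq.mem_x₁ h₁ h₂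
  obtain ⟨hxu₁, hxu₂⟩ := hTq.adj_of_between hD hX hSq.mem_x₂ h₂ h₃
  have hS' : IsOrderedSquare G X Y top x₁ a y₁ y₂ :=
    ⟨hSq.mem_x₁, hTq.mem_x₁, hSq.mem_y₁, hSq.mem_y₂, h₁, hSq.lt_y, hSq.adj₁₁, hSq.adj₁₂, hay₁,
      hay₂⟩
  have hT' : IsOrderedSquare G X Y top x₂ b u₁ u₂ :=
    ⟨hSq.mem_x₂, hTq.mem_x₂, hTq.mem_y₁, hTq.mem_y₂, h₃, hTq.lt_y, hxu₁, hxu₂, hTq.adj₂₁,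
      hTq.adj₂₂⟩
  have hle := hP.add_le_of_swap hS hT hST (hS'.isC4Square hX hY) (hT'.isC4Square hX hY)
    (by ext; simp; tauto)
  rw [hSq.totalSpread_eq hX hY, hTq.totalSpread_eq hX hY, hS'.totalSpread_eq hX hY,
    hT'.totalSpread_eq hX hY, numBetween_eq_add hD.injective_top hTq.mem_x₁ h₁ h₂,
    numBetween_eq_add hD.injective_top hSq.mem_x₂ h₂ h₃] at hle
  omega

/-- `{x₁, a}` and `{b, x₂}` together span strictly less of `X` than `{x₁, x₂}` and `{a, b}`, so
regrouping a nested pair of squares must increase the spread on the `Y`-side. -/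
lemma numBetween_lt_of_nested [Finite V] (hP : IsMinCostC4Packing G (totalSpread X Y top) P)
    (ht : Injective top) (hX : ∀ u ∈ X, ∀ v ∈ X, ¬G.Adj u v) (hY : ∀ u ∈ Y, ∀ v ∈ Y, ¬G.Adj u v)
    (hSq : IsOrderedSquare G X Y top x₁ x₂ y₁ y₂) (hTq : IsOrderedSquare G X Y top a b u₁ u₂)
    (hS : {x₁, x₂, y₁, y₂} ∈ P) (hT : {a, b, u₁, u₂} ∈ P)
    (hST : ({x₁, x₂, y₁, y₂} : Finset V) ≠ {a, b, u₁, u₂}) (h₁ : top x₁ < top a)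
    (h₂ : top b < top x₂) (q₁ q₂ s₁ s₂ : V) (hS' : IsOrderedSquare G X Y top x₁ a q₁ q₂)
    (hT' : IsOrderedSquare G X Y top b x₂ s₁ s₂)
    (hYs : ({q₁, q₂, s₁, s₂} : Finset V) = {y₁, y₂, u₁, u₂}) :
    numBetween Y top y₁ y₂ + numBetween Y top u₁ u₂ <
      numBetween Y top q₁ q₂ + numBetween Y top s₁ s₂ := by
  have hU : ({x₁, a, q₁, q₂} ∪ {b, x₂, s₁, s₂} : Finset V) =
      {x₁, x₂, y₁, y₂} ∪ {a, b, u₁, u₂} := by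
    ext w
    have hw := congrArg (w ∈ ·) hYs
    simp only [mem_union, mem_insert, mem_singleton, eq_iff_iff] at hw ⊢
    grind
  have hle := hP.add_le_of_swap hS hT hST (hS'.isC4Square hX hY) (hT'.isC4Square hX hY) hU
  rw [hSq.totalSpread_eq hX hY, hTq.totalSpread_eq hX hY, hS'.totalSpread_eq hX hY,
    hT'.totalSpread_eq hX hY, numBetween_eq_add ht hTq.mem_x₁ h₁ (hTq.lt_x.trans h₂),
    numBetween_eq_add ht hTq.mem_x₂ hTq.lt_x h₂] at hle
  omega

lemma not_nested [Finite V] (hP : IsMinCostC4Packing G (totalSpread X Y top) P)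
    (hD : IsPermDiagram G top bot) (hX : ∀ u ∈ X, ∀ v ∈ X, ¬G.Adj u v)
    (hY : ∀ u ∈ Y, ∀ v ∈ Y, ¬G.Adj u v) (hSq : IsOrderedSquare G X Y top x₁ x₂ y₁ y₂)
    (hTq : IsOrderedSquare G X Y top a b u₁ u₂) (hS : {x₁, x₂, y₁, y₂} ∈ P)
    (hT : {a, b, u₁, u₂} ∈ P) (hST : ({x₁, x₂, y₁, y₂} : Finset V) ≠ {a, b, u₁, u₂})
    (h₁ : top x₁ < top a) (h₂ : top b < top x₂) : False := by
  have ht := hD.injective_top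
  have hregroup := hP.numBetween_lt_of_nested ht hX hY hSq hTq hS hT hST h₁ h₂
  have hb := h₁.trans hTq.lt_x
  obtain ⟨hay₁, hay₂⟩ := hSq.adj_of_between hD hX hTq.mem_x₁ h₁ (hTq.lt_x.trans h₂)
  obtain ⟨hby₁, hby₂⟩ := hSq.adj_of_between hD hX hTq.mem_x₂ hb h₂
  by_cases hx₁u : G.Adj x₁ u₁ ∧ G.Adj x₁ u₂
  · have := hregroup u₁ u₂ y₁ y₂
      ⟨hSq.mem_x₁, hTq.mem_x₁, hTq.mem_y₁, hTq.mem_y₂, h₁, hTq.lt_y, hx₁u.1, hx₁u.2, hTq.adj₁₁,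
        hTq.adj₁₂⟩
      ⟨hTq.mem_x₂, hSq.mem_x₂, hSq.mem_y₁, hSq.mem_y₂, h₂, hSq.lt_y, hby₁, hby₂, hSq.adj₂₁,
        hSq.adj₂₂⟩ (by grind)
    omega
  by_cases hx₂u : G.Adj x₂ u₁ ∧ G.Adj x₂ u₂
  · have := hregroup y₁ y₂ u₁ u₂
      ⟨hSq.mem_x₁, hTq.mem_x₁, hSq.mem_y₁, hSq.mem_y₂, h₁, hSq.lt_y, hSq.adj₁₁, hSq.adj₁₂, hay₁,
        hay₂⟩
      ⟨hTq.mem_x₂, hSq.mem_x₂, hTq.mem_y₁, hTq.mem_y₂, h₂, hTq.lt_y, hTq.adj₂₁, hTq.adj₂₂, hx₂u.1,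
        hx₂u.2⟩ (by grind)
    omega
  -- each `uᵢ` sees `x₁` or `x₂`, and crossing edges `x₁ u₂`, `x₂ u₁` would force `x₁ u₁`
  have hu₁ := hSq.adj_or_adj_of_between hD hX hY hTq.mem_x₂ hTq.mem_y₁ hb h₂ hTq.adj₂₁
  have hu₂ := hSq.adj_or_adj_of_between hD hX hY hTq.mem_x₂ hTq.mem_y₂ hb h₂ hTq.adj₂₂
  have hcross : ¬(G.Adj x₁ u₂ ∧ G.Adj x₂ u₁ ∧ ¬G.Adj x₁ u₁) := fun ⟨h, h', h''⟩ =>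
    h'' (hD.strong_ordering (hX _ hSq.mem_x₁ _ hSq.mem_x₂) (hY _ hTq.mem_y₁ _ hTq.mem_y₂)
      hSq.lt_x hTq.lt_y h h').1
  obtain ⟨hx₁u₁, hx₂u₂, hx₂u₁, hx₁u₂⟩ :
      G.Adj x₁ u₁ ∧ G.Adj x₂ u₂ ∧ ¬G.Adj x₂ u₁ ∧ ¬G.Adj x₁ u₂ := by tauto
  have hu₁y₁ := hSq.top_lt_of_not_adj hD hX hY hTq.mem_y₁ hx₁u₁ hx₂u₁
  have hy₂u₂ := hSq.top_gt_of_not_adj hD hX hY hTq.mem_y₂ hx₂u₂ hx₁u₂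
  have := hregroup u₁ y₁ y₂ u₂
    ⟨hSq.mem_x₁, hTq.mem_x₁, hTq.mem_y₁, hSq.mem_y₁, h₁, hu₁y₁, hx₁u₁, hSq.adj₁₁, hTq.adj₁₁, hay₁⟩
    ⟨hTq.mem_x₂, hSq.mem_x₂, hSq.mem_y₂, hTq.mem_y₂, h₂, hy₂u₂, hby₂, hTq.adj₂₂, hSq.adj₂₂, hx₂u₂⟩
    (by grind)
  rw [numBetween_eq_add ht hSq.mem_y₁ hu₁y₁ (hSq.lt_y.trans hy₂u₂),
    numBetween_eq_add ht hSq.mem_y₂ hSq.lt_y hy₂u₂] at this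
  omega

lemma not_between [Finite V] (hP : IsMinCostC4Packing G (totalSpread X Y top) P)
    (hD : IsPermDiagram G top bot) (hX : ∀ u ∈ X, ∀ v ∈ X, ¬G.Adj u v)
    (hY : ∀ u ∈ Y, ∀ v ∈ Y, ¬G.Adj u v) (hunion : X ∪ Y = Set.univ) :
    ∀ S ∈ P, ∀ u ∈ S, ∀ v ∈ S, u ∈ X → v ∈ X → top u < top v →
      ∀ x ∈ X, ¬(top u < top x ∧ top x < top v) := by
  intro S hS u hu v hv huX hvX huv x hx ⟨h₁, h₂⟩
  have ht := hD.injective_top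
  obtain ⟨x₁, x₂, y₁, y₂, hSq, rfl⟩ := exists_isOrderedSquare ht hX hY hunion (hP.1.1 S hS)
  obtain ⟨rfl, rfl⟩ : x₁ = u ∧ x₂ = v := by
    rcases hSq.eq_of_mem hX hu huX with rfl | rfl <;> rcases hSq.eq_of_mem hX hv hvX with rfl | rfl
    all_goals first | exact ⟨rfl, rfl⟩ | exact absurd huv (by linarith [hSq.lt_x])
  obtain ⟨T, hT, hxT⟩ := hP.exists_mem_of_between hD hX hY hSq hS hx h₁ h₂
  obtain ⟨a, b, u₁, u₂, hTq, rfl⟩ := exists_isOrderedSquare ht hX hY hunion (hP.1.1 T hT)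
  have hST : ({x₁, x₂, y₁, y₂} : Finset V) ≠ {a, b, u₁, u₂} := by
    rintro hST
    rcases hSq.eq_of_mem hX (hST ▸ hxT) hx with rfl | rfl
    exacts [lt_irrefl _ h₁, lt_irrefl _ h₂]
  have hdisj := disjoint_left.1 (hP.1.2 hS hT hST)
  have hne : ∀ {p q}, p ∈ ({x₁, x₂, y₁, y₂} : Finset V) → q ∈ ({a, b, u₁, u₂} : Finset V) →
      top p ≠ top q := fun hp hq h => hdisj hp (ht h ▸ hq)
  rcases hTq.eq_of_mem hX hxT hx with rfl | rfl
  · rcases (hne hv (by simp : b ∈ _)).lt_or_gt with hb | hb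
    · exact hP.not_crossing hD hX hY hSq hTq hS hT hST h₁ h₂ hb
    · exact hP.not_nested hD hX hY hSq hTq hS hT hST h₁ hb
  · rcases (hne hu (by simp : a ∈ _)).lt_or_gt with ha | ha
    · exact hP.not_nested hD hX hY hSq hTq hS hT hST ha h₂
    · exact hP.not_crossing hD hX hY hTq hSq hT hS hST.symm ha h₁ h₂

end IsMinCostC4Packing

theorem stmt10_general {V : Type*} [Fintype V] [DecidableEq V] (G : SimpleGraph V)
    (top bot : V → ℝ) (htop : Function.Injective top) (hbot : Function.Injective bot)
    (hadj : ∀ u v, G.Adj u v ↔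
      (top u < top v ∧ bot v < bot u) ∨ (top v < top u ∧ bot u < bot v))
    (X Y : Set V) (hunion : X ∪ Y = Set.univ)
    (hX : ∀ u ∈ X, ∀ v ∈ X, ¬G.Adj u v) (hY : ∀ u ∈ Y, ∀ v ∈ Y, ¬G.Adj u v) :
    ∃ P : Finset (Finset V), IsC4Packing G P ∧
      (∀ Q : Finset (Finset V), IsC4Packing G Q → Q.card ≤ P.card) ∧
      (∀ S ∈ P, ∀ u ∈ S, ∀ v ∈ S, u ∈ X → v ∈ X → top u < top v →
        ∀ x ∈ X, ¬(top u < top x ∧ top x < top v)) ∧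
      (∀ S ∈ P, ∀ u ∈ S, ∀ v ∈ S, u ∈ Y → v ∈ Y → top u < top v →
        ∀ y ∈ Y, ¬(top u < top y ∧ top y < top v)) := by
  have hD : IsPermDiagram G top bot := ⟨htop, hbot, hadj⟩
  obtain ⟨P, hP, hmax⟩ := exists_maximum_isMinCostC4Packing G (totalSpread X Y top)
  refine ⟨P, hP.1, hmax, hP.not_between hD hX hY hunion, ?_⟩
  rw [totalSpread_comm] at hP
  exact hP.not_between hD hY hX (Set.union_comm X Y ▸ hunion)

/-- Let `G` be a bipartite permutation graph with bipartition `(X, Y)`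
given by a permutation diagram `top, bot`. Then there is a maximum `C4`-packing `P` such
that for every square `S ∈ P` the two vertices of `S ∩ X` are consecutive in `X` under
the ordering by `top`, and the two vertices of `S ∩ Y` are consecutive in `Y` under the
ordering by `top`. -/
theorem stmt10 {V : Type*} [Fintype V] [DecidableEq V] (G : SimpleGraph V)
    (top bot : V → ℝ) (htop : Function.Injective top) (hbot : Function.Injective bot)
    (hadj : ∀ u v, G.Adj u v ↔
      (top u < top v ∧ bot v < bot u) ∨ (top v < top u ∧ bot u < bot v))
    (X Y : Set V) (hdisj : Disjoint X Y) (hunion : X ∪ Y = Set.univ)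
    (hX : ∀ u ∈ X, ∀ v ∈ X, ¬G.Adj u v) (hY : ∀ u ∈ Y, ∀ v ∈ Y, ¬G.Adj u v) :
    ∃ P : Finset (Finset V), IsC4Packing G P ∧
      (∀ Q : Finset (Finset V), IsC4Packing G Q → Q.card ≤ P.card) ∧
      (∀ S ∈ P, ∀ u ∈ S, ∀ v ∈ S, u ∈ X → v ∈ X → top u < top v →
        ∀ x ∈ X, ¬(top u < top x ∧ top x < top v)) ∧
      (∀ S ∈ P, ∀ u ∈ S, ∀ v ∈ S, u ∈ Y → v ∈ Y → top u < top v →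
        ∀ y ∈ Y, ¬(top u < top y ∧ top y < top v)) :=
  stmt10_general G top bot htop hbot hadj X Y hunion hX hY
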